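/- arXiv:0907.3726 — 3 statements merged into one kernel-verified Lean document; each statement's English description precedes it below -/
import Mathlib

section
/- Let 0 < λ < 1 and let u₁, u₂, v : ℝⁿ → ℝ be nonnegative measurable functions satisfying v((1-λ)x + λy) ≥ u₁(x)^(1-λ) · u₂(y)^λ for all x, y ∈ ℝⁿ. Then ∫ v ≥ (∫ u₁)^(1-λ) · (∫ u₂)^λ. -/
/-!
In dimension one the inequality comes from the one-dimensional Brunn–Minkowski inequality
`|A| + |B| ≤ |A + B|`, applied to superlevel sets. After rescaling to `⨆ f = ⨆ g = 1`,
every superlevel set at a height `t < 1` is nonempty and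
`(1 - λ) • {f > t} + λ • {g > t} ⊆ {h > t}`; integrating over `t ∈ (0, 1)` (layer cake)
gives `(1 - λ) ∫ f + λ ∫ g ≤ ∫ h`, which dominates `(∫ f) ^ (1 - λ) * (∫ g) ^ λ` by
weighted AM–GM. Unbounded functions are handled by truncation and monotone convergence.

The inequality tensorizes: by Tonelli, applying it on each fibre and then to the fibre
integrals passes it from `μ` and `ν` to `μ.prod ν`, so induction on `n` gives `ℝⁿ`.
-/

open MeasureTheory Set
open scoped ENNReal NNReal Pointwise

namespace ENNReal

theorem geom_mean_le_arith_mean2_weighted {w₁ w₂ : ℝ} (hw₁ : 0 < w₁) (hw₂ : 0 < w₂)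
    (hw : w₁ + w₂ = 1) (p₁ p₂ : ℝ≥0∞) :
    p₁ ^ w₁ * p₂ ^ w₂ ≤ ENNReal.ofReal w₁ * p₁ + ENNReal.ofReal w₂ * p₂ := by
  rcases eq_or_ne p₁ ∞ with rfl | hp₁
  · simp [hw₁]
  rcases eq_or_ne p₂ ∞ with rfl | hp₂
  · simp [hw₂]
  lift p₁ to ℝ≥0 using hp₁
  lift p₂ to ℝ≥0 using hp₂
  lift w₁ to ℝ≥0 using hw₁.le
  lift w₂ to ℝ≥0 using hw₂.le
  rw [ofReal_coe_nnreal, ofReal_coe_nnreal, ← coe_rpow_of_nonneg _ hw₁.le,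
    ← coe_rpow_of_nonneg _ hw₂.le]
  exact_mod_cast NNReal.geom_mean_le_arith_mean2_weighted w₁ w₂ p₁ p₂ (mod_cast hw)

theorem iSup_rpow {ι : Sort*} (a : ι → ℝ≥0∞) {p : ℝ} (hp : 0 < p) :
    (⨆ i, a i) ^ p = ⨆ i, a i ^ p :=
  (orderIsoRpow p hp).map_iSup a

theorem iSup_min_natCast (a : ℝ≥0∞) : ⨆ n : ℕ, min a n = a := by
  rw [← inf_iSup_eq, iSup_natCast, inf_top_eq]

theorem ofReal_rpow_mul_ofReal_rpow_le {a b c p q : ℝ} (hp : 0 < p) (hq : 0 < q)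
    (h : a ^ p * b ^ q ≤ c) :
    ENNReal.ofReal a ^ p * ENNReal.ofReal b ^ q ≤ ENNReal.ofReal c := by
  rcases le_or_gt a 0 with ha | ha
  · simp [ofReal_of_nonpos ha, zero_rpow_of_pos hp]
  rcases le_or_gt b 0 with hb | hb
  · simp [ofReal_of_nonpos hb, zero_rpow_of_pos hq]
  rw [ofReal_rpow_of_nonneg ha.le hp.le, ofReal_rpow_of_nonneg hb.le hq.le,
    ← ofReal_mul (Real.rpow_nonneg ha.le p)]
  exact ofReal_le_ofReal h

end ENNReal

namespace Real

theorem volume_add_volume_le_volume_add_of_isCompact {K L : Set ℝ} (hK : IsCompact K)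
    (hL : IsCompact L) (hK₀ : K.Nonempty) (hL₀ : L.Nonempty) :
    volume K + volume L ≤ volume (K + L) := by
  set a := sSup K
  set b := sInf L
  have ha : a ∈ K := hK.sSup_mem hK₀
  have hb : b ∈ L := hL.sInf_mem hL₀
  -- With `a = max K` and `b = min L`, the translates `K + b` and `a + L` lie in `K + L`
  -- and meet only at `a + b`.
  have hKb : K + {b} ⊆ K + L := add_subset_add_left (singleton_subset_iff.2 hb)
  have haL : {a} + L ⊆ K + L := add_subset_add_right (singleton_subset_iff.2 ha)
  have hinter : (K + {b}) ∩ ({a} + L) ⊆ {a + b} := by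
    rintro _ ⟨⟨x, hx, _, rfl, rfl⟩, ⟨_, rfl, y, hy, hxy⟩⟩
    have hxa : x ≤ a := le_csSup hK.bddAbove hx
    have hby : b ≤ y := csInf_le hL.bddBelow hy
    rw [mem_singleton_iff]
    linarith
  calc volume K + volume L = volume (K + {b}) + volume ({a} + L) := by
        rw [add_singleton, singleton_add, image_add_right, image_add_left,
          measure_preimage_add_right, measure_preimage_add]
    _ = volume ((K + {b}) ∪ ({a} + L)) := by
        rw [← measure_union_add_inter' (hK.add isCompact_singleton).measurableSet,
          measure_mono_null hinter (measure_singleton _), add_zero]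
    _ ≤ volume (K + L) := measure_mono (union_subset hKb haL)

theorem volume_add_volume_le_volume_add {A B : Set ℝ} (hA : MeasurableSet A)
    (hB : MeasurableSet B) (hA₀ : A.Nonempty) (hB₀ : B.Nonempty) :
    volume A + volume B ≤ volume (A + B) := by
  obtain ⟨a, ha⟩ := hA₀
  obtain ⟨b, hb⟩ := hB₀
  rw [hA.measure_eq_iSup_isCompact, hB.measure_eq_iSup_isCompact]
  simp only [iSup_and']
  refine ENNReal.biSup_add_biSup_le' ⟨∅, empty_subset _, isCompact_empty⟩
    ⟨∅, empty_subset _, isCompact_empty⟩ fun K ⟨hKA, hK⟩ L ⟨hLB, hL⟩ => ?_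
  calc volume K + volume L ≤ volume (insert a K) + volume (insert b L) := by
        gcongr <;> exact subset_insert _ _
    _ ≤ volume (insert a K + insert b L) :=
        volume_add_volume_le_volume_add_of_isCompact (hK.insert a) (hL.insert b)
          (insert_nonempty a K) (insert_nonempty b L)
    _ ≤ volume (A + B) :=
        measure_mono (add_subset_add (insert_subset ha hKA) (insert_subset hb hLB))

end Real

theorem lintegral_eq_setLIntegral_Ioo_meas_lt {α : Type*} [MeasurableSpace α] {μ : Measure α}
    {f : α → ℝ≥0∞} (hf : Measurable f) (hf₁ : ∀ x, f x ≤ 1) :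
    ∫⁻ x, f x ∂μ = ∫⁻ t in Ioo (0 : ℝ) 1, μ {x | ENNReal.ofReal t < f x} := by
  have hf_top : ∀ x, f x ≠ ∞ := fun x => ne_top_of_le_ne_top ENNReal.one_ne_top (hf₁ x)
  have hempty : ∀ t ∈ Ici (1 : ℝ), μ {x | ENNReal.ofReal t < f x} = 0 := fun t ht =>
    measure_mono_null (fun x hx => not_lt.2 ((hf₁ x).trans (ENNReal.one_le_ofReal.2 ht)) hx)
      measure_empty
  calc ∫⁻ x, f x ∂μ = ∫⁻ x, ENNReal.ofReal (f x).toReal ∂μ :=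
        lintegral_congr fun x => (ENNReal.ofReal_toReal (hf_top x)).symm
    _ = ∫⁻ t in Ioi 0, μ {x | t < (f x).toReal} :=
        lintegral_eq_lintegral_meas_lt μ (ae_of_all _ fun _ => ENNReal.toReal_nonneg)
          hf.ennreal_toReal.aemeasurable
    _ = ∫⁻ t in Ioi 0, μ {x | ENNReal.ofReal t < f x} := by
        refine setLIntegral_congr_fun measurableSet_Ioi fun t ht => ?_
        simp only [ENNReal.ofReal_lt_iff_lt_toReal (le_of_lt ht) (hf_top _)]
    _ = ∫⁻ t in Ioo 0 1, μ {x | ENNReal.ofReal t < f x} := by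
        rw [← Ioo_union_Ici_eq_Ioi zero_lt_one,
          lintegral_union measurableSet_Ici (disjoint_left.2 fun _ ht ht' => not_le.2 ht.2 ht'),
          setLIntegral_congr_fun measurableSet_Ici hempty, lintegral_zero, add_zero]

section

variable {E : Type*} [AddCommMonoid E] [Module ℝ E]

theorem smul_setOf_lt_add_smul_setOf_lt_subset {lam : ℝ} (hlam₀ : 0 < lam) (hlam₁ : lam < 1)
    {f g h : E → ℝ≥0∞} (t : ℝ≥0∞)
    (hfgh : ∀ x y, f x ^ (1 - lam) * g y ^ lam ≤ h ((1 - lam) • x + lam • y)) :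
    (1 - lam) • {x | t < f x} + lam • {y | t < g y} ⊆ {z | t < h z} := by
  rintro _ ⟨_, ⟨x, hx, rfl⟩, _, ⟨y, hy, rfl⟩, rfl⟩
  calc t = t ^ (1 - lam) * t ^ lam := by
        rw [← ENNReal.rpow_add_of_nonneg _ _ (sub_pos.2 hlam₁).le hlam₀.le, sub_add_cancel,
          ENNReal.rpow_one]
    _ < f x ^ (1 - lam) * g y ^ lam :=
        ENNReal.mul_lt_mul (ENNReal.rpow_lt_rpow hx (sub_pos.2 hlam₁))
          (ENNReal.rpow_lt_rpow hy hlam₀)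
    _ ≤ h ((1 - lam) • x + lam • y) := hfgh x y

variable [MeasurableSpace E]

def HasPrekopaLeindler (μ : Measure E) (lam : ℝ) : Prop :=
  ∀ f g h : E → ℝ≥0∞, Measurable f → Measurable g → Measurable h →
    (∀ x y, f x ^ (1 - lam) * g y ^ lam ≤ h ((1 - lam) • x + lam • y)) →
    (∫⁻ x, f x ∂μ) ^ (1 - lam) * (∫⁻ y, g y ∂μ) ^ lam ≤ ∫⁻ z, h z ∂μ

end

namespace Real

variable {lam : ℝ}

theorem lintegral_add_lintegral_le_of_iSup_eq_one (hlam₀ : 0 < lam) (hlam₁ : lam < 1)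
    {f g h : ℝ → ℝ≥0∞} (hf : Measurable f) (hg : Measurable g) (hh : Measurable h)
    (hf₁ : ⨆ x, f x = 1) (hg₁ : ⨆ y, g y = 1)
    (hfgh : ∀ x y, f x ^ (1 - lam) * g y ^ lam ≤ h ((1 - lam) • x + lam • y)) :
    ENNReal.ofReal (1 - lam) * (∫⁻ x, f x) + ENNReal.ofReal lam * ∫⁻ y, g y
      ≤ ∫⁻ z, h z := by
  have hf_le (x : ℝ) : f x ≤ 1 := hf₁ ▸ le_iSup f x
  have hg_le (y : ℝ) : g y ≤ 1 := hg₁ ▸ le_iSup g y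
  have hlevel : ∀ t ∈ Ioo (0 : ℝ) 1,
      ENNReal.ofReal (1 - lam) * volume {x | ENNReal.ofReal t < f x}
          + ENNReal.ofReal lam * volume {y | ENNReal.ofReal t < g y}
        ≤ volume {z | ENNReal.ofReal t < min (h z) 1} := by
    intro t ht
    have ht₁ : ENNReal.ofReal t < 1 := ENNReal.ofReal_lt_one.2 ht.2
    obtain ⟨x₀, hx₀⟩ := lt_iSup_iff.1 (ht₁.trans_eq hf₁.symm)
    obtain ⟨y₀, hy₀⟩ := lt_iSup_iff.1 (ht₁.trans_eq hg₁.symm)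
    calc ENNReal.ofReal (1 - lam) * volume {x | ENNReal.ofReal t < f x}
            + ENNReal.ofReal lam * volume {y | ENNReal.ofReal t < g y}
          = volume ((1 - lam) • {x | ENNReal.ofReal t < f x})
            + volume (lam • {y | ENNReal.ofReal t < g y}) := by
          simp [Measure.addHaar_smul, abs_of_pos hlam₀, abs_of_pos (sub_pos.2 hlam₁)]
      _ ≤ volume ((1 - lam) • {x | ENNReal.ofReal t < f x}
            + lam • {y | ENNReal.ofReal t < g y}) :=
          volume_add_volume_le_volume_add ((hf measurableSet_Ioi).const_smul₀ _)
            ((hg measurableSet_Ioi).const_smul₀ _) ⟨_, smul_mem_smul_set hx₀⟩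
            ⟨_, smul_mem_smul_set hy₀⟩
      _ ≤ volume {z | ENNReal.ofReal t < min (h z) 1} :=
          measure_mono fun z hz =>
            lt_min (smul_setOf_lt_add_smul_setOf_lt_subset hlam₀ hlam₁ _ hfgh hz) ht₁
  calc ENNReal.ofReal (1 - lam) * (∫⁻ x, f x) + ENNReal.ofReal lam * ∫⁻ y, g y
      = (∫⁻ t in Ioo 0 1, ENNReal.ofReal (1 - lam) * volume {x | ENNReal.ofReal t < f x})
          + ∫⁻ t in Ioo 0 1, ENNReal.ofReal lam * volume {y | ENNReal.ofReal t < g y} := by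
        rw [lintegral_eq_setLIntegral_Ioo_meas_lt hf hf_le,
          lintegral_eq_setLIntegral_Ioo_meas_lt hg hg_le,
          lintegral_const_mul' _ _ ENNReal.ofReal_ne_top,
          lintegral_const_mul' _ _ ENNReal.ofReal_ne_top]
    _ ≤ ∫⁻ t in Ioo 0 1, volume {z | ENNReal.ofReal t < min (h z) 1} :=
        (le_lintegral_add _ _).trans (setLIntegral_mono' measurableSet_Ioo hlevel)
    _ = ∫⁻ z, min (h z) 1 :=
        (lintegral_eq_setLIntegral_Ioo_meas_lt (hh.min measurable_const)
          fun _ => min_le_right _ _).symm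
    _ ≤ ∫⁻ z, h z := lintegral_mono fun _ => min_le_left _ _

theorem lintegral_rpow_mul_lintegral_rpow_le_of_iSup_ne_top (hlam₀ : 0 < lam) (hlam₁ : lam < 1)
    {f g h : ℝ → ℝ≥0∞} (hf : Measurable f) (hg : Measurable g) (hh : Measurable h)
    (hf_top : ⨆ x, f x ≠ ∞) (hg_top : ⨆ y, g y ≠ ∞)
    (hfgh : ∀ x y, f x ^ (1 - lam) * g y ^ lam ≤ h ((1 - lam) • x + lam • y)) :
    (∫⁻ x, f x) ^ (1 - lam) * (∫⁻ y, g y) ^ lam ≤ ∫⁻ z, h z := by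
  have hlam₀' : 0 < 1 - lam := sub_pos.2 hlam₁
  set a := ⨆ x, f x
  set b := ⨆ y, g y
  rcases eq_or_ne a 0 with ha₀ | ha₀
  · simp [show f = 0 from funext (ENNReal.iSup_eq_zero.1 ha₀), ENNReal.zero_rpow_of_pos hlam₀']
  rcases eq_or_ne b 0 with hb₀ | hb₀
  · simp [show g = 0 from funext (ENNReal.iSup_eq_zero.1 hb₀), ENNReal.zero_rpow_of_pos hlam₀]
  set c := a⁻¹ ^ (1 - lam) * b⁻¹ ^ lam
  have hc₀ : c ≠ 0 := mul_ne_zero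
    (ENNReal.rpow_pos (ENNReal.inv_pos.2 hf_top) (ENNReal.inv_ne_top.2 ha₀)).ne'
    (ENNReal.rpow_pos (ENNReal.inv_pos.2 hg_top) (ENNReal.inv_ne_top.2 hb₀)).ne'
  have hc_top : c ≠ ∞ := ENNReal.mul_ne_top
    (ENNReal.rpow_ne_top_of_nonneg hlam₀'.le (ENNReal.inv_ne_top.2 ha₀))
    (ENNReal.rpow_ne_top_of_nonneg hlam₀.le (ENNReal.inv_ne_top.2 hb₀))
  have hrescale (x y : ℝ≥0∞) :
      (a⁻¹ * x) ^ (1 - lam) * (b⁻¹ * y) ^ lam = c * (x ^ (1 - lam) * y ^ lam) := by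
    rw [ENNReal.mul_rpow_of_nonneg _ _ hlam₀'.le, ENNReal.mul_rpow_of_nonneg _ _ hlam₀.le,
      mul_mul_mul_comm]
  have hnormalized := lintegral_add_lintegral_le_of_iSup_eq_one hlam₀ hlam₁
    (hf.const_mul a⁻¹) (hg.const_mul b⁻¹) (hh.const_mul c)
    (by rw [← ENNReal.mul_iSup, ENNReal.inv_mul_cancel ha₀ hf_top])
    (by rw [← ENNReal.mul_iSup, ENNReal.inv_mul_cancel hb₀ hg_top])
    fun x y => by rw [hrescale]; gcongr; exact hfgh x y
  have hamgm :=
    (ENNReal.geom_mean_le_arith_mean2_weighted hlam₀' hlam₀ (sub_add_cancel 1 lam)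
      (∫⁻ x, a⁻¹ * f x) (∫⁻ y, b⁻¹ * g y)).trans hnormalized
  rw [lintegral_const_mul _ hf, lintegral_const_mul _ hg, lintegral_const_mul _ hh,
    hrescale] at hamgm
  exact (ENNReal.mul_le_mul_iff_right hc₀ hc_top).1 hamgm

theorem hasPrekopaLeindler_volume (hlam₀ : 0 < lam) (hlam₁ : lam < 1) :
    HasPrekopaLeindler (volume : Measure ℝ) lam := by
  intro f g h hf hg hh hfgh
  have hlam₀' : 0 < 1 - lam := sub_pos.2 hlam₁
  have htrunc (n m : ℕ) :
      (∫⁻ x, min (f x) n) ^ (1 - lam) * (∫⁻ y, min (g y) m) ^ lam ≤ ∫⁻ z, h z :=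
    lintegral_rpow_mul_lintegral_rpow_le_of_iSup_ne_top hlam₀ hlam₁ (hf.min measurable_const)
      (hg.min measurable_const) hh
      (ne_top_of_le_ne_top (ENNReal.natCast_ne_top n) (iSup_le fun _ => min_le_right _ _))
      (ne_top_of_le_ne_top (ENNReal.natCast_ne_top m) (iSup_le fun _ => min_le_right _ _))
      fun x y => le_trans (by gcongr <;> exact min_le_left _ _) (hfgh x y)
  have hlimit {u : ℝ → ℝ≥0∞} (hu : Measurable u) :
      ∫⁻ x, u x = ⨆ n : ℕ, ∫⁻ x, min (u x) n := by
    rw [← lintegral_iSup (fun n => hu.min measurable_const)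
      fun n m hnm x => min_le_min_left _ (Nat.cast_le.2 hnm)]
    simp only [ENNReal.iSup_min_natCast]
  rw [hlimit hf, hlimit hg, ENNReal.iSup_rpow _ hlam₀', ENNReal.iSup_rpow _ hlam₀,
    ENNReal.iSup_mul]
  exact iSup_le fun n => (ENNReal.mul_iSup _ _).trans_le (iSup_le (htrunc n))

end Real

namespace HasPrekopaLeindler

variable {E F : Type*} [AddCommMonoid E] [Module ℝ E] [MeasurableSpace E]
  [AddCommMonoid F] [Module ℝ F] [MeasurableSpace F] {lam : ℝ}

theorem dirac (a : E) : HasPrekopaLeindler (Measure.dirac a) lam := by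
  intro f g h hf hg hh hfgh
  rw [lintegral_dirac' a hf, lintegral_dirac' a hg, lintegral_dirac' a hh]
  simpa [← add_smul] using hfgh a a

theorem of_measurePreserving {μ : Measure E} {ν : Measure F} (hν : HasPrekopaLeindler ν lam)
    (e : E ≃ᵐ F) (he : MeasurePreserving e μ ν) (he_lin : IsLinearMap ℝ e) :
    HasPrekopaLeindler μ lam := by
  intro f g h hf hg hh hfgh
  have hsymm (x y : F) : e.symm ((1 - lam) • x + lam • y)
      = (1 - lam) • e.symm x + lam • e.symm y :=
    e.injective <| by simp [he_lin.map_add, he_lin.map_smul]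
  have hpull (u : E → ℝ≥0∞) : ∫⁻ y, u (e.symm y) ∂ν = ∫⁻ x, u x ∂μ :=
    (he.symm e).lintegral_comp_emb e.symm.measurableEmbedding u
  have := hν (fun y => f (e.symm y)) (fun y => g (e.symm y)) (fun y => h (e.symm y))
    (hf.comp e.symm.measurable) (hg.comp e.symm.measurable) (hh.comp e.symm.measurable)
    fun x y => by simpa only [hsymm] using hfgh (e.symm x) (e.symm y)
  rwa [hpull, hpull, hpull] at this

theorem prod {μ : Measure E} {ν : Measure F} [SFinite ν] (hμ : HasPrekopaLeindler μ lam)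
    (hν : HasPrekopaLeindler ν lam) : HasPrekopaLeindler (μ.prod ν) lam := by
  intro f g h hf hg hh hfgh
  rw [lintegral_prod _ hf.aemeasurable, lintegral_prod _ hg.aemeasurable,
    lintegral_prod _ hh.aemeasurable]
  refine hμ _ _ _ hf.lintegral_prod_right' hg.lintegral_prod_right' hh.lintegral_prod_right'
    fun s t => hν _ _ _ (hf.comp measurable_prodMk_left)
      (hg.comp measurable_prodMk_left) (hh.comp measurable_prodMk_left)
      fun x y => hfgh (s, x) (t, y)

end HasPrekopaLeindler

theorem hasPrekopaLeindler_volume_pi {lam : ℝ} (hlam₀ : 0 < lam) (hlam₁ : lam < 1) :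
    ∀ n : ℕ, HasPrekopaLeindler (volume : Measure (Fin n → ℝ)) lam
  | 0 => by
    rw [volume_pi, Measure.pi_of_empty]
    exact HasPrekopaLeindler.dirac _
  | n + 1 =>
    ((Real.hasPrekopaLeindler_volume hlam₀ hlam₁).prod
      (hasPrekopaLeindler_volume_pi hlam₀ hlam₁ n)).of_measurePreserving
      (MeasurableEquiv.piFinSuccAbove (fun _ => ℝ) 0)
      (volume_preserving_piFinSuccAbove (fun _ => ℝ) 0)
      ⟨fun x y => by ext <;> simp [Fin.tail], fun c x => by ext <;> simp [Fin.tail]⟩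

theorem prekopa_leindler_euclidean_general {n : ℕ} {lam : ℝ} (hlam₀ : 0 < lam) (hlam₁ : lam < 1)
    (u₁ u₂ v : EuclideanSpace ℝ (Fin n) → ℝ)
    (hu₁ : Measurable u₁) (hu₂ : Measurable u₂) (hv : Measurable v)
    (hyp : ∀ x y : EuclideanSpace ℝ (Fin n),
      u₁ x ^ (1 - lam) * u₂ y ^ lam ≤ v ((1 - lam) • x + lam • y)) :
    (∫⁻ x, ENNReal.ofReal (u₁ x)) ^ (1 - lam) * (∫⁻ y, ENNReal.ofReal (u₂ y)) ^ lam
      ≤ ∫⁻ z, ENNReal.ofReal (v z) := by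
  have hPL : HasPrekopaLeindler (volume : Measure (EuclideanSpace ℝ (Fin n))) lam :=
    (hasPrekopaLeindler_volume_pi hlam₀ hlam₁ n).of_measurePreserving
      (MeasurableEquiv.toLp 2 (Fin n → ℝ)).symm
      (EuclideanSpace.volume_preserving_symm_measurableEquiv_toLp (Fin n))
      ⟨fun _ _ => rfl, fun _ _ => rfl⟩
  exact hPL _ _ _ hu₁.ennreal_ofReal hu₂.ennreal_ofReal hv.ennreal_ofReal
    fun x y => ENNReal.ofReal_rpow_mul_ofReal_rpow_le (sub_pos.2 hlam₁) hlam₀ (hyp x y)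

/-- **Prékopa–Leindler inequality** on `ℝⁿ` with Lebesgue measure:
if `0 < λ < 1` and `u₁, u₂, v` are nonnegative measurable functions with
`v ((1-λ) • x + λ • y) ≥ u₁ x ^ (1-λ) * u₂ y ^ λ` for all `x, y`, then
`∫ v ≥ (∫ u₁) ^ (1-λ) * (∫ u₂) ^ λ`. -/
theorem prekopa_leindler_euclidean {n : ℕ} {lam : ℝ} (hlam₀ : 0 < lam) (hlam₁ : lam < 1)
    (u₁ u₂ v : EuclideanSpace ℝ (Fin n) → ℝ)
    (hu₁ : Measurable u₁) (hu₂ : Measurable u₂) (hv : Measurable v)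
    (hu₁0 : ∀ x, 0 ≤ u₁ x) (hu₂0 : ∀ x, 0 ≤ u₂ x) (hv0 : ∀ x, 0 ≤ v x)
    (hyp : ∀ x y : EuclideanSpace ℝ (Fin n),
      u₁ x ^ (1 - lam) * u₂ y ^ lam ≤ v ((1 - lam) • x + lam • y)) :
    (∫⁻ x, ENNReal.ofReal (u₁ x)) ^ (1 - lam) * (∫⁻ y, ENNReal.ofReal (u₂ y)) ^ lam
      ≤ ∫⁻ z, ENNReal.ofReal (v z) :=
  prekopa_leindler_euclidean_general hlam₀ hlam₁ u₁ u₂ v hu₁ hu₂ hv hyp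
end

section
/- Let A : [τ₁, τ₂] → Mat(n, ℝ) be smooth with A(t) invertible for all t, satisfying A''(t) + (1/(2t))·A'(t) = M(t)·A(t) where each M(t) is symmetric, and suppose A'(τ₁)·A(τ₁)^(-1) is symmetric. Then A'(t)·A(t)^(-1) is symmetric for all t ∈ [τ₁, τ₂]. -/
open Set Matrix

/-!
With `W = Aᵀ A' - A'ᵀ A`, the matrix `A' A⁻¹` is symmetric exactly when `W = 0`. Differentiating,
`W' = Aᵀ A'' - A''ᵀ A`; substituting the equation, the terms in `M` cancel because `M` is symmetric,
leaving `W' = -W / (2t)`. Hence `√t W` is constant, and it vanishes at `τ₁`.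
-/

namespace Matrix

variable {ι R : Type*} [Fintype ι] [CommRing R]

def wronskian (A B : Matrix ι ι R) : Matrix ι ι R := Aᵀ * B - Bᵀ * A

@[simp]
theorem wronskian_self (A : Matrix ι ι R) : wronskian A A = 0 := sub_self _

theorem isSymm_mul_inv_iff_wronskian_eq_zero [DecidableEq ι] {A B : Matrix ι ι R}
    (hA : IsUnit A.det) :
    (B * A⁻¹).IsSymm ↔ wronskian A B = 0 := by
  have hAT : IsUnit Aᵀ.det := by rwa [det_transpose]
  rw [IsSymm, transpose_mul, transpose_nonsing_inv, wronskian, sub_eq_zero]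
  constructor
  · intro h
    calc Aᵀ * B = Aᵀ * (B * A⁻¹) * A := by rw [mul_assoc, nonsing_inv_mul_cancel_right _ _ hA]
      _ = Aᵀ * (Aᵀ⁻¹ * Bᵀ) * A := by rw [h]
      _ = Bᵀ * A := by rw [mul_nonsing_inv_cancel_left _ _ hAT]
  · intro h
    calc Aᵀ⁻¹ * Bᵀ = Aᵀ⁻¹ * (Bᵀ * A) * A⁻¹ := by
          rw [mul_assoc _ (Bᵀ * A), mul_assoc, mul_nonsing_inv _ hA, mul_one]
      _ = Aᵀ⁻¹ * (Aᵀ * B) * A⁻¹ := by rw [h]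
      _ = B * A⁻¹ := by rw [nonsing_inv_mul_cancel_left _ _ hAT]

theorem wronskian_eq_neg_smul_of_add_smul_eq_mul {A A' A'' M : Matrix ι ι R} {c : R}
    (h : A'' + c • A' = M * A) (hM : M.IsSymm) : wronskian A A'' = -c • wronskian A A' := by
  rw [eq_sub_of_add_eq h]
  simp only [wronskian, transpose_sub, transpose_mul, transpose_smul, hM.eq, Matrix.mul_sub,
    Matrix.sub_mul, Matrix.mul_smul, Matrix.smul_mul, ← Matrix.mul_assoc]
  module

end Matrix

section

variable {𝕜 : Type*} [NontriviallyNormedField 𝕜] {s : Set 𝕜} {t : 𝕜}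

theorem hasDerivWithinAt_matrix_mul_apply {l m p : Type*} [Fintype m] {A : 𝕜 → Matrix l m 𝕜}
    {B : 𝕜 → Matrix m p 𝕜} {A' : Matrix l m 𝕜} {B' : Matrix m p 𝕜}
    (hA : ∀ i j, HasDerivWithinAt (fun u => A u i j) (A' i j) s t)
    (hB : ∀ i j, HasDerivWithinAt (fun u => B u i j) (B' i j) s t) (i : l) (k : p) :
    HasDerivWithinAt (fun u => (A u * B u) i k) ((A' * B t + A t * B') i k) s t := by
  simp only [mul_apply, Matrix.add_apply, ← Finset.sum_add_distrib]
  exact HasDerivWithinAt.fun_sum fun j _ => (hA i j).mul (hB j k)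

theorem hasDerivWithinAt_wronskian_apply {ι : Type*} [Fintype ι] {A B : 𝕜 → Matrix ι ι 𝕜}
    {A' B' : Matrix ι ι 𝕜}
    (hA : ∀ i j, HasDerivWithinAt (fun u => A u i j) (A' i j) s t)
    (hB : ∀ i j, HasDerivWithinAt (fun u => B u i j) (B' i j) s t) (i j : ι) :
    HasDerivWithinAt (fun u => wronskian (A u) (B u) i j)
      ((wronskian A' (B t) + wronskian (A t) B') i j) s t := by
  have hAT : ∀ i j, HasDerivWithinAt (fun u => (A u)ᵀ i j) (A'ᵀ i j) s t := fun i j => hA j i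
  have hBT : ∀ i j, HasDerivWithinAt (fun u => (B u)ᵀ i j) (B'ᵀ i j) s t := fun i j => hB j i
  refine ((hasDerivWithinAt_matrix_mul_apply hAT hB i j).sub
    (hasDerivWithinAt_matrix_mul_apply hBT hA i j)).congr_deriv ?_
  simp only [wronskian, Matrix.add_apply, Matrix.sub_apply]
  abel

end

theorem Convex.eqOn_zero_of_hasDerivWithinAt_neg_inv_two_mul {f : ℝ → ℝ} {s : Set ℝ} {a : ℝ}
    (hs : Convex ℝ s) (hpos : ∀ t ∈ s, 0 < t)
    (hf : ∀ t ∈ s, HasDerivWithinAt f (-(1 / (2 * t)) * f t) s t) (ha : a ∈ s) (h0 : f a = 0) :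
    EqOn f 0 s := by
  have hg : ∀ t ∈ s, HasDerivWithinAt (fun u => √u * f u) 0 s t := by
    intro t ht
    have hsqrt := (Real.hasDerivAt_sqrt (hpos t ht).ne').hasDerivWithinAt (s := s)
    refine (hsqrt.mul (hf t ht)).congr_deriv ?_
    have hsq : √t * √t = t := Real.mul_self_sqrt (hpos t ht).le
    have : √t ≠ 0 := (Real.sqrt_pos.2 (hpos t ht)).ne'
    have : t ≠ 0 := (hpos t ht).ne'
    field_simp
    linear_combination (-f t) * hsq
  intro t ht
  have hconst : √t * f t = √a * f a := by
    simpa [sub_eq_zero] using hs.norm_image_sub_le_of_norm_hasDerivWithin_le hg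
      (fun _ _ => norm_zero.le) ha ht
  have : √t ≠ 0 := (Real.sqrt_pos.2 (hpos t ht)).ne'
  simpa [h0, this] using hconst

theorem symm_propagation_general
    {n : ℕ} {τ₁ τ₂ : ℝ} (h₁ : 0 < τ₁)
    {A A' A'' M : ℝ → Matrix (Fin n) (Fin n) ℝ}
    (hA : ∀ t ∈ Icc τ₁ τ₂, ∀ i j,
      HasDerivWithinAt (fun s => A s i j) (A' t i j) (Icc τ₁ τ₂) t)
    (hA' : ∀ t ∈ Icc τ₁ τ₂, ∀ i j,
      HasDerivWithinAt (fun s => A' s i j) (A'' t i j) (Icc τ₁ τ₂) t)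
    (hinv : ∀ t ∈ Icc τ₁ τ₂, IsUnit (A t).det)
    (hODE : ∀ t ∈ Icc τ₁ τ₂, A'' t + (1 / (2 * t)) • A' t = M t * A t)
    (hMsymm : ∀ t ∈ Icc τ₁ τ₂, (M t).IsSymm)
    (hinit : (A' τ₁ * (A τ₁)⁻¹).IsSymm) :
    ∀ t ∈ Icc τ₁ τ₂, (A' t * (A t)⁻¹).IsSymm := by
  intro t ht
  have hτ₁ : τ₁ ∈ Icc τ₁ τ₂ := ⟨le_rfl, ht.1.trans ht.2⟩
  have hW₀ := (isSymm_mul_inv_iff_wronskian_eq_zero (hinv τ₁ hτ₁)).1 hinit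
  have hW' : ∀ s ∈ Icc τ₁ τ₂, ∀ i j, HasDerivWithinAt (fun u => wronskian (A u) (A' u) i j)
      (-(1 / (2 * s)) * wronskian (A s) (A' s) i j) (Icc τ₁ τ₂) s := by
    intro s hs i j
    refine (hasDerivWithinAt_wronskian_apply (hA s hs) (hA' s hs) i j).congr_deriv ?_
    rw [wronskian_self, zero_add,
      wronskian_eq_neg_smul_of_add_smul_eq_mul (hODE s hs) (hMsymm s hs), Matrix.smul_apply,
      smul_eq_mul]
  refine (isSymm_mul_inv_iff_wronskian_eq_zero (hinv t ht)).2 (ext fun i j => ?_)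
  exact (convex_Icc τ₁ τ₂).eqOn_zero_of_hasDerivWithinAt_neg_inv_two_mul
    (fun s hs => h₁.trans_le hs.1) (fun s hs => hW' s hs i j) hτ₁ (by simp [hW₀]) ht

/-- Propagation of symmetry: if a smooth family of invertible matrices `A(t)` solves
`A''(t) + (1/(2t)) A'(t) = M(t) A(t)` with each `M(t)` symmetric, and if
`A'(τ₁) A(τ₁)⁻¹` is symmetric, then `A'(t) A(t)⁻¹` is symmetric for all
`t ∈ [τ₁, τ₂]`. -/
theorem symm_propagation
    {n : ℕ} {τ₁ τ₂ : ℝ} (h₁ : 0 < τ₁) (h₂ : τ₁ < τ₂)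
    {A A' A'' M : ℝ → Matrix (Fin n) (Fin n) ℝ}
    (hA : ∀ t ∈ Icc τ₁ τ₂, ∀ i j,
      HasDerivWithinAt (fun s => A s i j) (A' t i j) (Icc τ₁ τ₂) t)
    (hA' : ∀ t ∈ Icc τ₁ τ₂, ∀ i j,
      HasDerivWithinAt (fun s => A' s i j) (A'' t i j) (Icc τ₁ τ₂) t)
    (hA''cont : ∀ i j, ContinuousOn (fun s => A'' s i j) (Icc τ₁ τ₂))
    (hinv : ∀ t ∈ Icc τ₁ τ₂, IsUnit (A t).det)
    (hODE : ∀ t ∈ Icc τ₁ τ₂, A'' t + (1 / (2 * t)) • A' t = M t * A t)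
    (hMsymm : ∀ t ∈ Icc τ₁ τ₂, (M t).IsSymm)
    (hinit : (A' τ₁ * (A τ₁)⁻¹).IsSymm) :
    ∀ t ∈ Icc τ₁ τ₂, (A' t * (A t)⁻¹).IsSymm :=
  symm_propagation_general h₁ hA hA' hinv hODE hMsymm hinit
end

section
/- Let ψ : [τ₁, τ₂] → ℝ be C² with t^(-3/2)·d/dt[t^(3/2)·ψ'(t)] ≥ 0 on [τ₁, τ₂] ⊂ (0,∞). Then for any τ ∈ (τ₁, τ₂), writing 1/√τ = (1-λ)/√τ₁ + λ/√τ₂ with λ ∈ (0,1), one has exp(-ψ(τ)) ≥ exp(-ψ(τ₁))^(1-λ) · exp(-ψ(τ₂))^λ. -/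
open Set

/-!
With `t = s⁻²` one computes `d²/ds² ψ(s⁻²) = 4 s⁻⁶ (ψ''(t) + 3/(2t) ψ'(t))`, so the hypothesis
says exactly that `s ↦ ψ(s⁻²)` is convex on `[τ₂^(-1/2), τ₁^(-1/2)]`. The relation defining `λ`
reads `τ^(-1/2) = (1-λ) τ₁^(-1/2) + λ τ₂^(-1/2)`, so convexity gives
`ψ(τ) ≤ (1-λ) ψ(τ₁) + λ ψ(τ₂)`, which exponentiates to the claim.
-/

lemma inv_sq_inv_sqrt {τ : ℝ} (hτ : 0 ≤ τ) : ((√τ)⁻¹ ^ 2)⁻¹ = τ := by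
  rw [inv_pow, inv_inv, Real.sq_sqrt hτ]

lemma hasDerivAt_inv_sq {s : ℝ} (hs : s ≠ 0) :
    HasDerivAt (fun s : ℝ => (s ^ 2)⁻¹) (-2 / s ^ 3) s := by
  refine ((hasDerivAt_pow 2 s).fun_inv (pow_ne_zero 2 hs)).congr_deriv ?_
  norm_num
  field_simp

lemma hasDerivAt_neg_two_div_cube {s : ℝ} (hs : s ≠ 0) :
    HasDerivAt (fun s : ℝ => -2 / s ^ 3) (6 / s ^ 4) s := by
  refine ((hasDerivAt_const s (-2 : ℝ)).fun_div (hasDerivAt_pow 3 s)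
    (pow_ne_zero 3 hs)).congr_deriv ?_
  norm_num
  field_simp
  ring

section

variable {a b : ℝ}

lemma mapsTo_inv_sq_Icc (ha : 0 < a) :
    MapsTo (fun s : ℝ => (s ^ 2)⁻¹) (Icc a b) (Icc (b ^ 2)⁻¹ (a ^ 2)⁻¹) := by
  rintro s ⟨has, hsb⟩
  have hs : 0 < s := ha.trans_le has
  show (b ^ 2)⁻¹ ≤ (s ^ 2)⁻¹ ∧ (s ^ 2)⁻¹ ≤ (a ^ 2)⁻¹
  exact ⟨by gcongr, by gcongr⟩

lemma hasDerivWithinAt_comp_inv_sq (ha : 0 < a) {f f' : ℝ → ℝ}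
    (hf : ∀ t ∈ Icc (b ^ 2)⁻¹ (a ^ 2)⁻¹, HasDerivWithinAt f (f' t) (Icc (b ^ 2)⁻¹ (a ^ 2)⁻¹) t)
    {s : ℝ} (hs : s ∈ Icc a b) :
    HasDerivWithinAt (fun s => f (s ^ 2)⁻¹) (f' (s ^ 2)⁻¹ * (-2 / s ^ 3)) (Icc a b) s :=
  (hf _ (mapsTo_inv_sq_Icc ha hs)).comp s
    (hasDerivAt_inv_sq (ha.trans_le hs.1).ne').hasDerivWithinAt (mapsTo_inv_sq_Icc ha)

theorem convexOn_comp_inv_sq (ha : 0 < a) {ψ ψ' ψ'' : ℝ → ℝ}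
    (hψ : ∀ t ∈ Icc (b ^ 2)⁻¹ (a ^ 2)⁻¹, HasDerivWithinAt ψ (ψ' t) (Icc (b ^ 2)⁻¹ (a ^ 2)⁻¹) t)
    (hψ' : ∀ t ∈ Icc (b ^ 2)⁻¹ (a ^ 2)⁻¹,
      HasDerivWithinAt ψ' (ψ'' t) (Icc (b ^ 2)⁻¹ (a ^ 2)⁻¹) t)
    (hψineq : ∀ t ∈ Icc (b ^ 2)⁻¹ (a ^ 2)⁻¹, 0 ≤ ψ'' t + 3 / (2 * t) * ψ' t) :
    ConvexOn ℝ (Icc a b) (fun s => ψ (s ^ 2)⁻¹) := by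
  have hcomp' : ∀ s ∈ Icc a b, HasDerivWithinAt (fun s => ψ' (s ^ 2)⁻¹ * (-2 / s ^ 3))
      (ψ'' (s ^ 2)⁻¹ * (-2 / s ^ 3) * (-2 / s ^ 3) + ψ' (s ^ 2)⁻¹ * (6 / s ^ 4)) (Icc a b) s :=
    fun s hs => (hasDerivWithinAt_comp_inv_sq ha hψ' hs).mul
      (hasDerivAt_neg_two_div_cube (ha.trans_le hs.1).ne').hasDerivWithinAt
  refine convexOn_of_hasDerivWithinAt2_nonneg (convex_Icc a b)
    (fun s hs => (hasDerivWithinAt_comp_inv_sq ha hψ hs).continuousWithinAt)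
    (fun s hs => (hasDerivWithinAt_comp_inv_sq ha hψ (interior_subset hs)).mono interior_subset)
    (fun s hs => (hcomp' s (interior_subset hs)).mono interior_subset) fun s hs => ?_
  have hs0 : s ≠ 0 := (ha.trans_le (interior_subset hs).1).ne'
  have hsecond : ψ'' (s ^ 2)⁻¹ * (-2 / s ^ 3) * (-2 / s ^ 3) + ψ' (s ^ 2)⁻¹ * (6 / s ^ 4) =
      4 / s ^ 6 * (ψ'' (s ^ 2)⁻¹ + 3 / (2 * (s ^ 2)⁻¹) * ψ' (s ^ 2)⁻¹) := by
    field_simp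
    ring
  rw [hsecond]
  exact mul_nonneg (by positivity) (hψineq _ (mapsTo_inv_sq_Icc ha (interior_subset hs)))

end

/-- If `ψ` is `C²` on `[τ₁, τ₂] ⊂ (0,∞)` with `ψ''(t) + (3/(2t)) ψ'(t) ≥ 0`, then for
`τ ∈ (τ₁, τ₂)` and `λ ∈ (0,1)` with `1/√τ = (1-λ)/√τ₁ + λ/√τ₂`, one has
`exp(-ψ(τ)) ≥ exp(-ψ(τ₁))^(1-λ) · exp(-ψ(τ₂))^λ`. -/
theorem exp_neg_psi_interpolation
    {τ₁ τ τ₂ lam : ℝ} (h₁ : 0 < τ₁) (h₂ : τ₁ < τ) (h₃ : τ < τ₂)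
    {ψ ψ' ψ'' : ℝ → ℝ}
    (hψ : ∀ t ∈ Icc τ₁ τ₂, HasDerivWithinAt ψ (ψ' t) (Icc τ₁ τ₂) t)
    (hψ' : ∀ t ∈ Icc τ₁ τ₂, HasDerivWithinAt ψ' (ψ'' t) (Icc τ₁ τ₂) t)
    (hψineq : ∀ t ∈ Icc τ₁ τ₂, 0 ≤ ψ'' t + 3 / (2 * t) * ψ' t)
    (hlam : lam ∈ Ioo (0 : ℝ) 1)
    (hrel : 1 / Real.sqrt τ = (1 - lam) / Real.sqrt τ₁ + lam / Real.sqrt τ₂) :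
    Real.exp (-ψ τ₁) ^ (1 - lam) * Real.exp (-ψ τ₂) ^ lam ≤ Real.exp (-ψ τ) := by
  have hτ : 0 < τ := h₁.trans h₂
  have hτ₂ : 0 < τ₂ := hτ.trans h₃
  have hIcc : Icc ((√τ₁)⁻¹ ^ 2)⁻¹ ((√τ₂)⁻¹ ^ 2)⁻¹ = Icc τ₁ τ₂ := by
    rw [inv_sq_inv_sqrt h₁.le, inv_sq_inv_sqrt hτ₂.le]
  have hconv := convexOn_comp_inv_sq (a := (√τ₂)⁻¹) (b := (√τ₁)⁻¹) (by positivity)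
    (hIcc ▸ hψ) (hIcc ▸ hψ') (hIcc ▸ hψineq)
  have hab : (√τ₂)⁻¹ ≤ (√τ₁)⁻¹ := by gcongr; exact (h₂.trans h₃).le
  have hcomb : (1 - lam) * (√τ₁)⁻¹ + lam * (√τ₂)⁻¹ = (√τ)⁻¹ := by
    simpa only [one_div, div_eq_mul_inv, one_mul] using hrel.symm
  have hψτ := hconv.2 (right_mem_Icc.2 hab) (left_mem_Icc.2 hab) (sub_nonneg.2 hlam.2.le)
    hlam.1.le (sub_add_cancel 1 lam)
  simp only [smul_eq_mul, hcomb, inv_sq_inv_sqrt h₁.le, inv_sq_inv_sqrt hτ₂.le,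
    inv_sq_inv_sqrt hτ.le] at hψτ
  rw [← Real.exp_mul, ← Real.exp_mul, ← Real.exp_add, Real.exp_le_exp]
  linarith
end
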